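/- Let c_n be the number of binary strings of length n with no maximal zero-run of length ≡ 1 mod 3, and let d_n be the number of n×2 arrays over {0,1,2} satisfying the Harter-Heighway array conditions (every 1 preceded left or above by 0, no 0 preceded left or above by 0, every 2 preceded in its column by 0,1 in the two rows above). Then c_n = d_n for all n ≥ 1. -/

import Mathlib

/-- A binary string (`false` = 0, `true` = 1) in which every maximal run of
zeros has length not congruent to 1 modulo 3. -/
def GoodString (l : List Bool) : Prop :=
  ∀ r ∈ l.splitOn true, r.length % 3 ≠ 1

noncomputable def goodStringCount (n : ℕ) : ℕ :=
  Nat.card {l : List Bool // l.length = n ∧ GoodString l}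

/-- The Harter-Heighway array conditions on an `n × 2` array over `{0,1,2}`:
every 1 is immediately preceded (above or to the left) by a 0, no 0 is
immediately preceded (above or to the left) by a 0, and every 2 is immediately
preceded in its column by 0, 1 in the two rows above. -/
def IsDragonArray {n : ℕ} (m : Fin n → Fin 2 → Fin 3) : Prop :=
  (∀ (i : Fin n) (j : Fin 2), m i j = 1 →
      (1 ≤ i.val ∧
        m ⟨i.val - 1, Nat.lt_of_le_of_lt (Nat.sub_le _ _) i.isLt⟩ j = 0) ∨
      (j = 1 ∧ m i 0 = 0)) ∧
  (∀ (i : Fin n) (j : Fin 2), m i j = 0 →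
      (1 ≤ i.val →
        m ⟨i.val - 1, Nat.lt_of_le_of_lt (Nat.sub_le _ _) i.isLt⟩ j ≠ 0) ∧
      (j = 1 → m i 0 ≠ 0)) ∧
  (∀ (i : Fin n) (j : Fin 2), m i j = 2 →
      2 ≤ i.val ∧
      m ⟨i.val - 1, Nat.lt_of_le_of_lt (Nat.sub_le _ _) i.isLt⟩ j = 1 ∧
      m ⟨i.val - 2, Nat.lt_of_le_of_lt (Nat.sub_le _ _) i.isLt⟩ j = 0)

noncomputable def dragonArrayCount (n : ℕ) : ℕ :=
  Nat.card {m : Fin n → Fin 2 → Fin 3 // IsDragonArray m}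

instance (l : List Bool) : Decidable (GoodString l) := by
  unfold GoodString; infer_instance

-- Finite instance
instance listFinite {α : Type*} [Fintype α] {n : ℕ} {P : List α → Prop} :
    Finite {l : List α // l.length = n ∧ P l} :=
  Finite.of_injective (fun x : {l : List α // l.length = n ∧ P l} =>
      (fun i : Fin n => x.1.get (Fin.cast x.2.1.symm i)))
    (by rintro ⟨a, ha, hPa⟩ ⟨b, hb, hPb⟩ h
        apply Subtype.ext
        apply List.ext_get (by rw [ha, hb])
        intro i h1 h2
        have := congrFun h ⟨i, ha ▸ h1⟩
        simpa using this)

-- splitOn lemmas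
lemma splitOn_true_cons (l : List Bool) :
    (true :: l).splitOn true = [] :: l.splitOn true := by
  simp [List.splitOn, List.splitOnP_cons]

lemma splitOn_false_cons (l : List Bool) :
    (false :: l).splitOn true = (l.splitOn true).modifyHead (List.cons false) := by
  simp [List.splitOn, List.splitOnP_cons]

lemma good_true_iff (l : List Bool) : GoodString (true :: l) ↔ GoodString l := by
  unfold GoodString
  rw [splitOn_true_cons]
  simp

lemma not_good_ft (l : List Bool) : ¬ GoodString (false :: true :: l) := by
  intro h
  have := h [false] (by rw [splitOn_false_cons, splitOn_true_cons]; simp)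
  exact this rfl

lemma good_fft_iff (l : List Bool) :
    GoodString (false :: false :: true :: l) ↔ GoodString l := by
  unfold GoodString
  rw [splitOn_false_cons, splitOn_false_cons, splitOn_true_cons]
  simp

lemma good_fff_iff (l : List Bool) :
    GoodString (false :: false :: false :: l) ↔ GoodString l := by
  obtain ⟨h, t, hht⟩ : ∃ h t, l.splitOn true = h :: t := by
    rcases e : l.splitOn true with _ | ⟨h, t⟩
    · exact absurd e (List.splitOnP_ne_nil _ _)
    · exact ⟨h, t, rfl⟩
  unfold GoodString
  rw [splitOn_false_cons, splitOn_false_cons, splitOn_false_cons, hht]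
  simp only [List.modifyHead_cons, List.mem_cons, List.length_cons]
  constructor
  · rintro H r (rfl | hr)
    · have := H (false :: false :: false :: r) (Or.inl rfl)
      simp only [List.length_cons] at this ⊢
      omega
    · exact H r (Or.inr hr)
  · rintro H r (rfl | hr)
    · have := H h (Or.inl rfl)
      simp only [List.length_cons] at *
      omega
    · exact H r (Or.inr hr)

-- base cases
lemma gsc0 : goodStringCount 0 = 1 := by
  have : Unique {l : List Bool // l.length = 0 ∧ GoodString l} :=
    { default := ⟨[], rfl, by decide⟩
      uniq := by
        rintro ⟨l, hl, hg⟩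
        apply Subtype.ext
        exact List.length_eq_zero_iff.1 hl }
  exact Nat.card_unique

lemma gsc1 : goodStringCount 1 = 1 := by
  have : Unique {l : List Bool // l.length = 1 ∧ GoodString l} :=
    { default := ⟨[true], rfl, by decide⟩
      uniq := by
        rintro ⟨l, hl, hg⟩
        apply Subtype.ext
        match l, hl with
        | [b], _ =>
          cases b
          · exact absurd hg (by decide)
          · rfl }
  exact Nat.card_unique

lemma gsc2 : goodStringCount 2 = 2 := by
  have e : Bool ≃ {l : List Bool // l.length = 2 ∧ GoodString l} := by
    refine Equiv.ofBijective
      (fun b => if b then ⟨[true, true], rfl, by decide⟩ else ⟨[false, false], rfl, by decide⟩)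
      ⟨?_, ?_⟩
    · intro a b h
      cases a <;> cases b <;> simp_all
    · rintro ⟨l, hl, hg⟩
      match l, hl with
      | [a, b], _ =>
        cases a <;> cases b
        · exact ⟨false, rfl⟩
        · exact absurd hg (by decide)
        · exact absurd hg (by decide)
        · exact ⟨true, rfl⟩
  unfold goodStringCount
  rw [← Nat.card_congr e]
  simp [Nat.card_eq_fintype_card]

-- recurrence
lemma gsc_rec (n : ℕ) :
    goodStringCount (n + 3) = goodStringCount (n + 2) + 2 * goodStringCount n := by
  have key : goodStringCount (n + 3) =
      goodStringCount (n + 2) + (goodStringCount n + goodStringCount n) := by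
    unfold goodStringCount
    rw [← Nat.card_sum, ← Nat.card_sum]
    apply Nat.card_congr
    refine (Equiv.ofBijective (fun x => match x with
      | Sum.inl ⟨l, hl, hg⟩ =>
          ⟨true :: l, by simp [hl], (good_true_iff l).2 hg⟩
      | Sum.inr (Sum.inl ⟨l, hl, hg⟩) =>
          ⟨false :: false :: true :: l, by simp [hl], (good_fft_iff l).2 hg⟩
      | Sum.inr (Sum.inr ⟨l, hl, hg⟩) =>
          ⟨false :: false :: false :: l, by simp [hl], (good_fff_iff l).2 hg⟩)
      ⟨?_, ?_⟩).symm
    · rintro (⟨a, ha, hga⟩ | ⟨a, ha, hga⟩ | ⟨a, ha, hga⟩)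
        (⟨b, hb, hgb⟩ | ⟨b, hb, hgb⟩ | ⟨b, hb, hgb⟩) h <;>
        simp_all [Subtype.ext_iff]
    · rintro ⟨l, hl, hg⟩
      match l, hl with
      | a :: b :: c :: t, hl =>
        have ht : t.length = n := by simpa using hl
        cases a
        · cases b
          · cases c
            · exact ⟨Sum.inr (Sum.inr ⟨t, ht, (good_fff_iff t).1 hg⟩), rfl⟩
            · exact ⟨Sum.inr (Sum.inl ⟨t, ht, (good_fft_iff t).1 hg⟩), rfl⟩
          · exact absurd hg (not_good_ft _)
        · exact ⟨Sum.inl ⟨b :: c :: t, by simpa using hl, (good_true_iff _).1 hg⟩, rfl⟩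
  omega

-- Dragon arrays
abbrev Row := Fin 2 → Fin 3

def Ok (p q r : Row) : Prop := ∀ j : Fin 2,
  (r j = 1 → q j = 0 ∨ (j = 1 ∧ r 0 = 0)) ∧
  (r j = 0 → q j ≠ 0 ∧ (j = 1 → r 0 ≠ 0)) ∧
  (r j = 2 → q j = 1 ∧ p j = 0)

instance (p q r : Row) : Decidable (Ok p q r) := by unfold Ok; infer_instance

def Chain (p q : Row) : List Row → Prop
  | [] => True
  | r :: l => Ok p q r ∧ Chain q r l

lemma chain_nil (p q : Row) : Chain p q [] := trivial

lemma chain_cons (p q r : Row) (l : List Row) :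
    Chain p q (r :: l) ↔ Ok p q r ∧ Chain q r l := Iff.rfl

noncomputable def cnt (p q : Row) (n : ℕ) : ℕ :=
  Nat.card {l : List Row // l.length = n ∧ Chain p q l}

lemma cnt_zero (p q : Row) : cnt p q 0 = 1 := by
  have : Unique {l : List Row // l.length = 0 ∧ Chain p q l} :=
    { default := ⟨[], rfl, trivial⟩
      uniq := by
        rintro ⟨l, hl, _⟩
        apply Subtype.ext
        exact List.length_eq_zero_iff.1 hl }
  exact Nat.card_unique

lemma cnt_succ_one {p q r₁ : Row} (h1 : Ok p q r₁)
    (hall : ∀ r : Row, Ok p q r → r = r₁) (n : ℕ) :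
    cnt p q (n + 1) = cnt q r₁ n := by
  unfold cnt
  apply Nat.card_congr
  refine (Equiv.ofBijective (fun x : {l : List Row // l.length = n ∧ Chain q r₁ l} =>
      (⟨r₁ :: x.1, by simp [x.2.1], h1, x.2.2⟩ :
        {l : List Row // l.length = n + 1 ∧ Chain p q l})) ⟨?_, ?_⟩).symm
  · rintro ⟨a, ha, hga⟩ ⟨b, hb, hgb⟩ h
    simp_all [Subtype.ext_iff]
  · rintro ⟨l, hl, hc⟩
    match l, hl with
    | r :: t, hl =>
      obtain ⟨hok, hch⟩ := hc
      obtain rfl := hall r hok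
      exact ⟨⟨t, by simpa using hl, hch⟩, rfl⟩

lemma cnt_succ_two {p q r₁ r₂ : Row} (h1 : Ok p q r₁) (h2 : Ok p q r₂) (hne : r₁ ≠ r₂)
    (hall : ∀ r : Row, Ok p q r → r = r₁ ∨ r = r₂) (n : ℕ) :
    cnt p q (n + 1) = cnt q r₁ n + cnt q r₂ n := by
  unfold cnt
  rw [← Nat.card_sum]
  apply Nat.card_congr
  refine (Equiv.ofBijective (fun x => match x with
    | Sum.inl (⟨l, hl, hc⟩ : {l : List Row // l.length = n ∧ Chain q r₁ l}) =>
        (⟨r₁ :: l, by simp [hl], h1, hc⟩ :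
          {l : List Row // l.length = n + 1 ∧ Chain p q l})
    | Sum.inr (⟨l, hl, hc⟩ : {l : List Row // l.length = n ∧ Chain q r₂ l}) =>
        ⟨r₂ :: l, by simp [hl], h2, hc⟩) ⟨?_, ?_⟩).symm
  · rintro (⟨a, ha, hga⟩ | ⟨a, ha, hga⟩) (⟨b, hb, hgb⟩ | ⟨b, hb, hgb⟩) h <;>
      simp_all [Subtype.ext_iff]
  · rintro ⟨l, hl, hc⟩
    match l, hl with
    | r :: t, hl =>
      obtain ⟨hok, hch⟩ := hc
      rcases hall r hok with rfl | rfl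
      · exact ⟨Sum.inl ⟨t, by simpa using hl, hch⟩, rfl⟩
      · exact ⟨Sum.inr ⟨t, by simpa using hl, hch⟩, rfl⟩

def q11 : Row := ![1, 1]
def q01 : Row := ![0, 1]
def q10 : Row := ![1, 0]
def q21 : Row := ![2, 1]
def q12 : Row := ![1, 2]
def q02 : Row := ![0, 2]
def q20 : Row := ![2, 0]

lemma tS0 (n : ℕ) : cnt q11 q11 (n + 1) = cnt q11 q01 n :=
  cnt_succ_one (by decide) (by decide) n
lemma tS1 (n : ℕ) : cnt q11 q01 (n + 1) = cnt q01 q10 n :=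
  cnt_succ_one (by decide) (by decide) n
lemma tA (n : ℕ) : cnt q01 q10 (n + 1) = cnt q10 q01 n + cnt q10 q21 n :=
  cnt_succ_two (by decide) (by decide) (by decide) (by decide) n
lemma tB (n : ℕ) : cnt q10 q01 (n + 1) = cnt q01 q10 n + cnt q01 q12 n :=
  cnt_succ_two (by decide) (by decide) (by decide) (by decide) n
lemma tC (n : ℕ) : cnt q10 q21 (n + 1) = cnt q21 q01 n + cnt q21 q02 n :=
  cnt_succ_two (by decide) (by decide) (by decide) (by decide) n
lemma tD (n : ℕ) : cnt q01 q12 (n + 1) = cnt q12 q01 n + cnt q12 q20 n :=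
  cnt_succ_two (by decide) (by decide) (by decide) (by decide) n
lemma tE (n : ℕ) : cnt q21 q01 (n + 1) = cnt q01 q10 n :=
  cnt_succ_one (by decide) (by decide) n
lemma tF (n : ℕ) : cnt q21 q02 (n + 1) = cnt q02 q10 n :=
  cnt_succ_one (by decide) (by decide) n
lemma tG (n : ℕ) : cnt q12 q01 (n + 1) = cnt q01 q10 n :=
  cnt_succ_one (by decide) (by decide) n
lemma tH (n : ℕ) : cnt q12 q20 (n + 1) = cnt q20 q01 n :=
  cnt_succ_one (by decide) (by decide) n
lemma tI (n : ℕ) : cnt q02 q10 (n + 1) = cnt q10 q01 n + cnt q10 q21 n :=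
  cnt_succ_two (by decide) (by decide) (by decide) (by decide) n
lemma tJ (n : ℕ) : cnt q20 q01 (n + 1) = cnt q01 q10 n + cnt q01 q12 n :=
  cnt_succ_two (by decide) (by decide) (by decide) (by decide) n

lemma I_eq_A : ∀ n, cnt q02 q10 n = cnt q01 q10 n
  | 0 => by rw [cnt_zero, cnt_zero]
  | (n + 1) => by rw [tI, tA]

lemma J_eq_B : ∀ n, cnt q20 q01 n = cnt q10 q01 n
  | 0 => by rw [cnt_zero, cnt_zero]
  | (n + 1) => by rw [tJ, tB]

lemma C_eq (n : ℕ) : cnt q10 q21 (n + 2) = 2 * cnt q01 q10 n := by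
  rw [tC, tE, tF, I_eq_A]; ring

lemma D_eq (n : ℕ) : cnt q01 q12 (n + 2) = cnt q01 q10 n + cnt q20 q01 n := by
  rw [tD, tG, tH]

lemma A_rec' (n : ℕ) :
    cnt q01 q10 (n + 3) = cnt q10 q01 (n + 2) + 2 * cnt q01 q10 n := by
  rw [show n + 3 = (n + 2) + 1 from rfl, tA, C_eq]

lemma B_rec' (n : ℕ) :
    cnt q10 q01 (n + 3) = cnt q01 q10 (n + 2) + (cnt q01 q10 n + cnt q10 q01 n) := by
  rw [show n + 3 = (n + 2) + 1 from rfl, tB, D_eq, J_eq_B]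

lemma A_eq_B : ∀ n, cnt q01 q10 n = cnt q10 q01 n := by
  intro n
  induction n using Nat.strong_induction_on with
  | _ n ih =>
    match n with
    | 0 => rw [cnt_zero, cnt_zero]
    | 1 => rw [tA, tB, cnt_zero, cnt_zero, cnt_zero, cnt_zero]
    | 2 =>
      have e1 : cnt q01 q10 2 = cnt q10 q01 1 + 2 := by
        rw [show (2 : ℕ) = 1 + 1 from rfl, tA, tC, cnt_zero, cnt_zero]
      have e2 : cnt q10 q01 2 = cnt q01 q10 1 + 2 := by
        rw [show (2 : ℕ) = 1 + 1 from rfl, tB, tD, cnt_zero, cnt_zero]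
      rw [e1, e2, ih 1 (by omega)]
    | (k + 3) =>
      rw [A_rec', B_rec', ih (k + 2) (by omega), ih k (by omega)]; ring

lemma A_rec (n : ℕ) : cnt q01 q10 (n + 3) = cnt q01 q10 (n + 2) + 2 * cnt q01 q10 n := by
  rw [A_rec', A_eq_B (n + 2)]

lemma A_eq_g : ∀ n, cnt q01 q10 n = goodStringCount (n + 1) := by
  intro n
  induction n using Nat.strong_induction_on with
  | _ n ih =>
    match n with
    | 0 => rw [cnt_zero, gsc1]
    | 1 => rw [tA, cnt_zero, cnt_zero, gsc2]
    | 2 =>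
      have h3 : goodStringCount 3 = 4 := by rw [gsc_rec 0, gsc2, gsc0]
      have e1 : cnt q01 q10 2 = cnt q10 q01 1 + 2 := by
        rw [show (2 : ℕ) = 1 + 1 from rfl, tA, tC, cnt_zero, cnt_zero]
      rw [e1, tB, cnt_zero, cnt_zero, h3]
    | (k + 3) =>
      rw [A_rec, gsc_rec (k + 1), ih (k + 2) (by omega), ih k (by omega)]

def junk : Row := fun _ => 0

def pre (p q : Row) (l : List Row) : ℕ → Row
  | 0 => p
  | 1 => q
  | (k + 2) => l.getD k junk

lemma pre_zero (p q : Row) (l : List Row) : pre p q l 0 = p := rfl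
lemma pre_one (p q : Row) (l : List Row) : pre p q l 1 = q := rfl
lemma pre_two (p q : Row) (l : List Row) (k : ℕ) : pre p q l (k + 2) = l.getD k junk := rfl

lemma pre_cons (p q r : Row) (t : List Row) : ∀ k, pre p q (r :: t) (k + 1) = pre q r t k
  | 0 => rfl
  | 1 => rfl
  | (k + 2) => by simp [pre, List.getD_cons_succ]

lemma chain_iff : ∀ (l : List Row) (p q : Row),
    Chain p q l ↔
      ∀ i, i < l.length → Ok (pre p q l i) (pre p q l (i + 1)) (l.getD i junk)
  | [], p, q => by simp [Chain]
  | (r :: t), p, q => by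
    rw [chain_cons, chain_iff t q r]
    constructor
    · rintro ⟨hok, hch⟩ i h
      match i with
      | 0 => exact hok
      | (k + 1) =>
        rw [pre_cons, pre_cons, List.getD_cons_succ]
        exact hch k (by simpa using h)
    · intro H
      refine ⟨H 0 (by simp), fun k hk => ?_⟩
      have := H (k + 1) (by simpa using hk)
      rwa [pre_cons, pre_cons, List.getD_cons_succ] at this

lemma q11_ne_zero : ∀ j : Fin 2, q11 j ≠ 0 := by decide
lemma q11_eq_one : ∀ j : Fin 2, q11 j = 1 := by decide

lemma isDragon_iff {n : ℕ} (m : Fin n → Row) :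
    IsDragonArray m ↔ Chain q11 q11 (List.ofFn m) := by
  rw [chain_iff]
  have hlen : (List.ofFn m).length = n := List.length_ofFn
  have hg : ∀ (i : ℕ) (h : i < n), (List.ofFn m).getD i junk = m ⟨i, h⟩ := by
    intro i h
    rw [List.getD_eq_getElem _ _ (by simpa [hlen] using h)]
    simp
  constructor
  · rintro ⟨H1, H2, H3⟩ i h
    have hin : i < n := by simpa [hlen] using h
    rw [hg i hin]
    intro j
    refine ⟨?_, ?_, ?_⟩
    · intro h1
      rcases H1 ⟨i, hin⟩ j h1 with ⟨hi1, habove⟩ | ⟨hj, hleft⟩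
      · match i, hin, hi1, habove with
        | (k + 1), hin, _, habove =>
          left
          show pre q11 q11 (List.ofFn m) (k + 2) j = 0
          rw [pre_two, hg k (by omega)]
          exact habove
      · exact Or.inr ⟨hj, hleft⟩
    · intro h0
      obtain ⟨ha, hb⟩ := H2 ⟨i, hin⟩ j h0
      refine ⟨?_, hb⟩
      match i, hin, ha with
      | 0, _, _ => exact q11_ne_zero j
      | (k + 1), hin, ha =>
        show pre q11 q11 (List.ofFn m) (k + 2) j ≠ 0
        rw [pre_two, hg k (by omega)]
        exact ha (Nat.succ_le_succ (Nat.zero_le k))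
    · intro h2
      obtain ⟨hi2, h1a, h0a⟩ := H3 ⟨i, hin⟩ j h2
      match i, hin, hi2, h1a, h0a with
      | (k + 2), hin, _, h1a, h0a =>
        constructor
        · show pre q11 q11 (List.ofFn m) (k + 3) j = 1
          show pre q11 q11 (List.ofFn m) ((k + 1) + 2) j = 1
          rw [pre_two, hg (k + 1) (by omega)]
          exact h1a
        · show pre q11 q11 (List.ofFn m) (k + 2) j = 0
          rw [pre_two, hg k (by omega)]
          exact h0a
  · intro H
    have key : ∀ (i : ℕ) (h : i < n) (j : Fin 2),
        (m ⟨i, h⟩ j = 1 →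
          pre q11 q11 (List.ofFn m) (i + 1) j = 0 ∨ (j = 1 ∧ m ⟨i, h⟩ 0 = 0)) ∧
        (m ⟨i, h⟩ j = 0 →
          pre q11 q11 (List.ofFn m) (i + 1) j ≠ 0 ∧ (j = 1 → m ⟨i, h⟩ 0 ≠ 0)) ∧
        (m ⟨i, h⟩ j = 2 →
          pre q11 q11 (List.ofFn m) (i + 1) j = 1 ∧ pre q11 q11 (List.ofFn m) i j = 0) := by
      intro i h j
      have := H i (by simpa [hlen] using h)
      rw [hg i (by simpa [hlen] using h)] at this
      exact this j
    refine ⟨?_, ?_, ?_⟩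
    · rintro ⟨i, hin⟩ j h1
      rcases ((key i hin j).1 h1) with hc | hc
      · match i, hin, hc with
        | 0, _, hc => exact absurd hc (q11_ne_zero j)
        | (k + 1), hin, hc =>
          left
          refine ⟨Nat.succ_le_succ (Nat.zero_le k), ?_⟩
          rw [show pre q11 q11 (List.ofFn m) (k + 1 + 1) j = 0 ↔
              (List.ofFn m).getD k junk j = 0 from Iff.rfl, hg k (by omega)] at hc
          exact hc
      · exact Or.inr hc
    · rintro ⟨i, hin⟩ j h0
      obtain ⟨ha, hb⟩ := (key i hin j).2.1 h0
      refine ⟨?_, hb⟩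
      match i, hin, ha with
      | (k + 1), hin, ha =>
        intro _
        rw [show pre q11 q11 (List.ofFn m) (k + 1 + 1) j ≠ 0 ↔
            (List.ofFn m).getD k junk j ≠ 0 from Iff.rfl, hg k (by omega)] at ha
        exact ha
      | 0, _, _ => exact fun h => absurd h (Nat.not_succ_le_zero 0)
    · rintro ⟨i, hin⟩ j h2
      obtain ⟨ha, hb⟩ := (key i hin j).2.2 h2
      match i, hin, ha, hb with
      | 0, _, ha, hb =>
        exact absurd hb (q11_ne_zero j)
      | 1, _, ha, hb =>
        exfalso
        rw [show pre q11 q11 (List.ofFn m) 2 j = 1 ↔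
            (List.ofFn m).getD 0 junk j = 1 from Iff.rfl, hg 0 (by omega)] at ha
        have hq : q11 j = 0 := hb
        exact q11_ne_zero j hq
      | (k + 2), hin, ha, hb =>
        rw [show pre q11 q11 (List.ofFn m) (k + 2 + 1) j = 1 ↔
            (List.ofFn m).getD (k + 1) junk j = 1 from Iff.rfl, hg (k + 1) (by omega)] at ha
        rw [show pre q11 q11 (List.ofFn m) (k + 2) j = 0 ↔
            (List.ofFn m).getD k junk j = 0 from Iff.rfl, hg k (by omega)] at hb
        exact ⟨Nat.le_add_left 2 k, ha, hb⟩

lemma dragonCount_eq (n : ℕ) : dragonArrayCount n = cnt q11 q11 n := by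
  unfold dragonArrayCount cnt
  apply Nat.card_congr
  refine Equiv.ofBijective (fun x : {m : Fin n → Fin 2 → Fin 3 // IsDragonArray m} =>
    (⟨List.ofFn x.1, List.length_ofFn, (isDragon_iff x.1).1 x.2⟩ :
      {l : List Row // l.length = n ∧ Chain q11 q11 l})) ⟨?_, ?_⟩
  · rintro ⟨a, ha⟩ ⟨b, hb⟩ h
    apply Subtype.ext
    have := congrArg Subtype.val h
    simpa [List.ofFn_inj] using this
  · rintro ⟨l, hl, hc⟩
    refine ⟨⟨fun i => l.get (Fin.cast hl.symm i), ?_⟩, ?_⟩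
    · rw [isDragon_iff]
      have : List.ofFn (fun i => l.get (Fin.cast hl.symm i)) = l := by
        apply List.ext_get (by simp [hl])
        intro i h1 h2
        simp
      rwa [this]
    · apply Subtype.ext
      apply List.ext_get (by simp [hl])
      intro i h1 h2
      simp


/-- `c_n = d_n` with indexing offset so that the initial values agree:
`c_n` here counts the good binary strings of length `n - 1`
(so `c_1 = 1, c_2 = 1, c_3 = 2, …`), matching `d_n = 1, 1, 2, …`. -/
theorem stmt_17 :
    ∀ n, 1 ≤ n → goodStringCount (n - 1) = dragonArrayCount n := by
  intro n hn
  match n, hn with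
  | 1, _ =>
    show goodStringCount 0 = dragonArrayCount 1
    rw [gsc0, dragonCount_eq, tS0, cnt_zero]
  | (m + 2), _ =>
    show goodStringCount (m + 1) = dragonArrayCount (m + 2)
    rw [dragonCount_eq, show m + 2 = (m + 1) + 1 from rfl, tS0, tS1, A_eq_g]
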